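/- Let K ≥ 2 and consider a tournament on K arms. For each arm i with in-degree deg⁻(i) ≥ 1, we have ∑_{i : deg⁻(i) ≥ 1} (K−1)/deg⁻(i) ≤ 5(K−1)·(⌈log₂(K−1)⌉ + 1), where deg⁻(i) is the number of arms beating arm i. -/

import Mathlib

open Finset

/-!
Group the arms by the dyadic range `[2^t, 2^(t+1))` of their in-degree. The `n` arms of in-degree
at most `d` span a sub-tournament with `n(n-1)/2` edges, each arm receiving at most `d` of them,
so `n ≤ 2d + 1`. Hence the range `t` holds fewer than `4·2^t` arms, each contributing at most
`2^(-t)` to `∑ 1/deg⁻`, and there are `⌊log₂(K-1)⌋ + 1` ranges.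
-/

section Tournament

variable {α : Type*} {r : α → α → Prop} [DecidableRel r]

lemma card_filter_rel_add_card_filter_rel (hirr : ∀ v, ¬ r v v)
    (htour : ∀ u v, u ≠ v → (r u v ↔ ¬ r v u)) {S : Finset α} {i : α} (hi : i ∈ S) :
    #{j ∈ S | r j i} + #{j ∈ S | r i j} = #S - 1 := by
  classical
  rw [← card_erase_of_mem hi,
    ← card_filter_add_card_filter_not (s := S.erase i) (fun j => r j i)]
  congr 2 <;> ext j <;> simp only [mem_filter, mem_erase] <;> grind

lemma two_mul_sum_card_filter_rel (hirr : ∀ v, ¬ r v v)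
    (htour : ∀ u v, u ≠ v → (r u v ↔ ¬ r v u)) (S : Finset α) :
    2 * ∑ i ∈ S, #{j ∈ S | r j i} = #S * (#S - 1) := by
  have hswap : ∑ i ∈ S, #{j ∈ S | r j i} = ∑ i ∈ S, #{j ∈ S | r i j} := by
    simp only [card_filter]
    exact sum_comm
  calc 2 * ∑ i ∈ S, #{j ∈ S | r j i}
      = ∑ i ∈ S, (#{j ∈ S | r j i} + #{j ∈ S | r i j}) := by
        rw [sum_add_distrib, ← hswap, two_mul]
    _ = #S * (#S - 1) := by
        rw [sum_congr rfl fun i hi => card_filter_rel_add_card_filter_rel hirr htour hi,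
          sum_const, smul_eq_mul]

variable [Fintype α]

variable (r) in
def inDeg (i : α) : ℕ := #{j | r j i}

lemma inDeg_le_card_sub_one (hirr : ∀ v, ¬ r v v) (i : α) :
    inDeg r i ≤ Fintype.card α - 1 := by
  classical
  rw [inDeg, ← card_univ, ← card_erase_of_mem (mem_univ i)]
  exact card_le_card fun j hj =>
    mem_erase.mpr ⟨by rintro rfl; exact hirr j (mem_filter.mp hj).2, mem_univ j⟩

lemma card_filter_inDeg_le (hirr : ∀ v, ¬ r v v)
    (htour : ∀ u v, u ≠ v → (r u v ↔ ¬ r v u)) (d : ℕ) :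
    #{i | inDeg r i ≤ d} ≤ 2 * d + 1 := by
  set S : Finset α := {i | inDeg r i ≤ d}
  have hsum : ∑ i ∈ S, #{j ∈ S | r j i} ≤ #S * d := by
    refine sum_le_card_nsmul S _ d fun i hi => ?_
    exact (card_le_card (filter_subset_filter _ (subset_univ S))).trans (mem_filter.mp hi).2
  have hedges : #S * (#S - 1) ≤ #S * (2 * d) := by
    rw [← two_mul_sum_card_filter_rel hirr htour S, mul_left_comm]
    omega
  rcases Nat.eq_zero_or_pos #S with hS | hS
  · omega
  · have := Nat.le_of_mul_le_mul_left hedges hS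
    omega

end Tournament

lemma sum_inv_filter_log_eq_le {ι : Type*} (s : Finset ι) (f : ι → ℕ)
    (hpos : ∀ i ∈ s, f i ≠ 0) (hcard : ∀ d, #{i ∈ s | f i ≤ d} ≤ 2 * d + 1)
    (t : ℕ) :
    ∑ i ∈ s with Nat.log 2 (f i) = t, (f i : ℝ)⁻¹ ≤ 4 := by
  have hcard_block : #{i ∈ s | Nat.log 2 (f i) = t} ≤ 4 * 2 ^ t := by
    have hsub : {i ∈ s | Nat.log 2 (f i) = t} ⊆ {i ∈ s | f i ≤ 2 ^ (t + 1) - 1} := by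
      intro i hi
      simp only [mem_filter] at hi ⊢
      have hlt := Nat.lt_pow_succ_log_self (b := 2) (by norm_num) (f i)
      rw [hi.2] at hlt
      exact ⟨hi.1, by omega⟩
    have hle := (card_le_card hsub).trans (hcard _)
    have hpos_pow := Nat.one_le_two_pow (n := t)
    rw [pow_succ] at hle
    omega
  have hterm : ∀ i ∈ {i ∈ s | Nat.log 2 (f i) = t},
      (f i : ℝ)⁻¹ ≤ ((2 : ℝ) ^ t)⁻¹ := by
    intro i hi
    simp only [mem_filter] at hi
    have hpow : 2 ^ t ≤ f i := hi.2 ▸ Nat.pow_log_le_self 2 (hpos i hi.1)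
    gcongr
    exact_mod_cast hpow
  calc ∑ i ∈ s with Nat.log 2 (f i) = t, (f i : ℝ)⁻¹
      ≤ #{i ∈ s | Nat.log 2 (f i) = t} • ((2 : ℝ) ^ t)⁻¹ := sum_le_card_nsmul _ _ _ hterm
    _ ≤ (4 * 2 ^ t : ℕ) • ((2 : ℝ) ^ t)⁻¹ := by gcongr
    _ = 4 := by rw [nsmul_eq_mul]; push_cast; field_simp

lemma sum_inv_le_of_card_filter_le {ι : Type*} (s : Finset ι) (f : ι → ℕ) (m : ℕ)
    (hpos : ∀ i ∈ s, f i ≠ 0) (hle : ∀ i ∈ s, f i ≤ m)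
    (hcard : ∀ d, #{i ∈ s | f i ≤ d} ≤ 2 * d + 1) :
    ∑ i ∈ s, (f i : ℝ)⁻¹ ≤ 4 * (Nat.log 2 m + 1) := by
  have hmaps : ∀ i ∈ s, Nat.log 2 (f i) ∈ range (Nat.log 2 m + 1) := fun i hi =>
    mem_range_succ_iff.mpr (Nat.log_mono_right (hle i hi))
  rw [← sum_fiberwise_of_maps_to hmaps]
  calc _ ≤ ∑ _t ∈ range (Nat.log 2 m + 1), (4 : ℝ) :=
        sum_le_sum fun t _ => sum_inv_filter_log_eq_le s f hpos hcard t
    _ = 4 * (Nat.log 2 m + 1) := by simp [mul_comm]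

/-- In a tournament on `K ≥ 2` arms, summing `(K-1)/deg⁻(i)` over arms `i` with
in-degree at least `1` gives at most `5(K-1)(⌈log₂(K-1)⌉ + 1)`. -/
theorem sum_inv_indeg_le (K : ℕ) (hK : 2 ≤ K)
    (r : Fin K → Fin K → Prop) [DecidableRel r]
    (hirr : ∀ v, ¬ r v v)
    (htour : ∀ u v : Fin K, u ≠ v → (r u v ↔ ¬ r v u)) :
    ∑ i ∈ Finset.univ.filter
        (fun i : Fin K => 1 ≤ (Finset.univ.filter (fun j => r j i)).card),
      ((K : ℝ) - 1) / ((Finset.univ.filter (fun j => r j i)).card : ℝ)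
      ≤ 5 * ((K : ℝ) - 1) * ((Nat.clog 2 (K - 1) : ℝ) + 1) := by
  have hsum : ∑ i ∈ {i | 1 ≤ inDeg r i}, (inDeg r i : ℝ)⁻¹
      ≤ 4 * (Nat.log 2 (K - 1) + 1) := by
    refine sum_inv_le_of_card_filter_le _ _ _ (fun i hi => ?_) (fun i _ => ?_) fun d => ?_
    · exact Nat.one_le_iff_ne_zero.mp (mem_filter.mp hi).2
    · simpa using inDeg_le_card_sub_one hirr i
    · exact (card_le_card (filter_subset_filter _ (subset_univ _))).trans
        (card_filter_inDeg_le hirr htour d)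
  have hK1 : (0 : ℝ) ≤ K - 1 := by
    have : (2 : ℝ) ≤ K := by exact_mod_cast hK
    linarith
  have hlog : (Nat.log 2 (K - 1) : ℝ) ≤ Nat.clog 2 (K - 1) := by
    exact_mod_cast Nat.log_le_clog 2 (K - 1)
  simp only [div_eq_mul_inv, ← mul_sum]
  calc ((K : ℝ) - 1) * ∑ i ∈ {i | 1 ≤ inDeg r i}, (inDeg r i : ℝ)⁻¹
      ≤ (K - 1) * (4 * (Nat.log 2 (K - 1) + 1)) := by gcongr
    _ ≤ 5 * (K - 1) * (Nat.clog 2 (K - 1) + 1) := by nlinarith
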